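/- There exist absolute constants c, C > 0 such that for all integers j₁ ≥ 1 and j₀ ≥ j₁ + 10, the function ρ := 2^{j₀} 1_{[0,2^{−j₀}]} − 2^{j₁} 1_{[0,2^{−j₁}]} ∈ L¹(ℝ) ∩ L²(ℝ) satisfies c 2^{−j₁/2} ≤ ‖ρ‖_{H^{−1}} ≤ C 2^{−j₁/2}. -/

import Mathlib

open MeasureTheory Metric Filter

noncomputable section

/-- The Fourier transform `ρ̂(ξ) = ∫ e^{-2πi x ξ} ρ(x) dx` of a real-valued function on ℝ. -/
def FT1 (ρ : ℝ → ℝ) (ξ : ℝ) : ℂ :=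
  ∫ x : ℝ, Complex.exp (-(2 * Real.pi * (x * ξ)) * Complex.I) * (ρ x : ℂ)

/-- The `H^{-1}(ℝ)` norm `‖ρ‖_{H^{-1}} = (∫ (1+|ξ|²)⁻¹ |ρ̂(ξ)|² dξ)^{1/2}`. -/
def Hneg1 (ρ : ℝ → ℝ) : ℝ :=
  (∫ ξ : ℝ, (1 + ξ ^ 2)⁻¹ * ‖FT1 ρ ξ‖ ^ 2) ^ (1/2 : ℝ)

/-- The geometric mixing functional with ball averages on ℝ:
`𝔤_{r₀}[ρ] = sup { |B_r(x)|⁻¹ |∫_{B_r(x)} ρ| : x ∈ ℝ, r ≥ r₀ }` with `B_r(x) = (x-r, x+r)`. -/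
def gball1 (ρ : ℝ → ℝ) (r₀ : ℝ) : ℝ :=
  ⨆ p : {q : ℝ × ℝ // r₀ ≤ q.2},
    |∫ y in ball p.1.1 p.1.2, ρ y| / (volume (ball p.1.1 p.1.2)).toReal

end

/-!
Write `a = 2^{-j}` and let `g(t) = ∫₀¹ e^{-2πixt} dx` be the Fourier transform of `1_{[0,1]}`, so
that `ρ̂(ξ) = g(a₀ξ) - g(a₁ξ)`. Since `|g| ≤ 1` and `|g(t) - 1| ≤ 2π|t|`, we get
`|ρ̂(ξ)| ≤ min(2, 4πa₁|ξ|)`, and `(1+ξ²)⁻¹ min(4, A²ξ²)` has a Lorentzian majorant of mass `4πA`,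
so `‖ρ‖²_{H^{-1}} ≲ a₁`. Conversely, for `ξ ∈ [1/a₁, 2/a₁]` the coarse bump has decayed,
`|g(a₁ξ)| ≤ 1/π`, while the fine one has not, `|g(a₀ξ) - 1| ≤ 4πa₀/a₁ ≤ 1/8`; hence
`|ρ̂| ≥ 1/2` there, and this interval alone contributes `≳ a₁` to `‖ρ‖²_{H^{-1}}`.
-/

-- An integral rather than the closed form `(e^{-2πit} - 1)/(-2πit)`, which is junk at `t = 0`.
noncomputable def bumpFT (t : ℝ) : ℂ :=
  ∫ x in (0:ℝ)..1, Complex.exp (-(2 * Real.pi * (x * t)) * Complex.I)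

@[fun_prop]
theorem continuous_bumpFT : Continuous bumpFT := by
  unfold bumpFT
  fun_prop

theorem norm_exp_neg_two_pi_mul_I (x t : ℝ) :
    ‖Complex.exp (-(2 * Real.pi * (x * t)) * Complex.I)‖ = 1 := by
  simp [Complex.norm_exp]

theorem norm_bumpFT_le_one (t : ℝ) : ‖bumpFT t‖ ≤ 1 := by
  simpa [bumpFT] using intervalIntegral.norm_integral_le_of_norm_le_const (a := 0) (b := 1)
    fun x _ => (norm_exp_neg_two_pi_mul_I x t).le

theorem norm_exp_neg_two_pi_mul_I_sub_one_le (x t : ℝ) :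
    ‖Complex.exp (-(2 * Real.pi * (x * t)) * Complex.I) - 1‖ ≤ 2 * Real.pi * |x * t| := by
  have h := Real.norm_exp_I_mul_ofReal_sub_one_le (x := -(2 * Real.pi * (x * t)))
  rw [norm_neg, Real.norm_eq_abs, abs_mul, abs_of_pos Real.two_pi_pos] at h
  convert h using 4
  push_cast; ring

theorem norm_bumpFT_sub_one_le (t : ℝ) : ‖bumpFT t - 1‖ ≤ 2 * Real.pi * |t| := by
  have h : bumpFT t - 1 =
      ∫ x in (0:ℝ)..1, (Complex.exp (-(2 * Real.pi * (x * t)) * Complex.I) - 1) := by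
    rw [intervalIntegral.integral_sub (Continuous.intervalIntegrable (by fun_prop) _ _)
      intervalIntegrable_const]
    simp [bumpFT]
  rw [h]
  calc _ ≤ 2 * Real.pi * |t| * |1 - 0| :=
        intervalIntegral.norm_integral_le_of_norm_le_const fun x hx => by
          rw [Set.uIoc_of_le zero_le_one] at hx
          refine (norm_exp_neg_two_pi_mul_I_sub_one_le x t).trans ?_
          rw [abs_mul, abs_of_pos hx.1]
          gcongr
          exact mul_le_of_le_one_left (abs_nonneg t) hx.2
    _ = 2 * Real.pi * |t| := by simp

theorem bumpFT_eq_of_ne_zero {t : ℝ} (ht : t ≠ 0) :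
    bumpFT t = (Complex.exp (-(2 * Real.pi * t) * Complex.I) - 1) /
      (-(2 * Real.pi * t) * Complex.I) := by
  have hc : (-(2 * Real.pi * t) * Complex.I : ℂ) ≠ 0 := by simp [Real.pi_ne_zero, ht]
  have := integral_exp_mul_complex (a := 0) (b := 1) hc
  simp only [Complex.ofReal_zero, Complex.ofReal_one, mul_zero, mul_one, Complex.exp_zero] at this
  rw [← this, bumpFT]
  congr 1; ext x; ring_nf

theorem norm_bumpFT_le_inv {t : ℝ} (ht : t ≠ 0) : ‖bumpFT t‖ ≤ (Real.pi * |t|)⁻¹ := by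
  rw [bumpFT_eq_of_ne_zero ht, norm_div]
  have h1 : ‖Complex.exp (-(2 * Real.pi * t) * Complex.I) - 1‖ ≤ 2 :=
    calc _ ≤ ‖Complex.exp (-(2 * Real.pi * t) * Complex.I)‖ + ‖(1 : ℂ)‖ := norm_sub_le _ _
      _ = 2 := by norm_num [Complex.norm_exp]
  have h2 : ‖(-(2 * Real.pi * t) * Complex.I : ℂ)‖ = 2 * (Real.pi * |t|) := by
    simp [abs_of_pos Real.pi_pos]; ring
  have : 0 < Real.pi * |t| := by positivity
  calc _ ≤ 2 / (2 * (Real.pi * |t|)) := by rw [h2]; gcongr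
    _ = (Real.pi * |t|)⁻¹ := by field_simp

theorem integrable_FT1_integrand {ρ : ℝ → ℝ} (hρ : Integrable ρ) (ξ : ℝ) :
    Integrable fun x : ℝ => Complex.exp (-(2 * Real.pi * (x * ξ)) * Complex.I) * (ρ x : ℂ) :=
  hρ.ofReal.bdd_mul (c := 1) (by fun_prop)
    (ae_of_all _ fun x => (norm_exp_neg_two_pi_mul_I x ξ).le)

theorem FT1_sub {ρ σ : ℝ → ℝ} (hρ : Integrable ρ) (hσ : Integrable σ) (ξ : ℝ) :
    FT1 (fun x => ρ x - σ x) ξ = FT1 ρ ξ - FT1 σ ξ := by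
  rw [FT1, FT1, FT1, ← integral_sub (integrable_FT1_integrand hρ ξ)
    (integrable_FT1_integrand hσ ξ)]
  congr 1; ext x; push_cast; ring

theorem FT1_const_mul (c : ℝ) (ρ : ℝ → ℝ) (ξ : ℝ) :
    FT1 (fun x => c * ρ x) ξ = c * FT1 ρ ξ := by
  rw [FT1, FT1, ← integral_const_mul]
  congr 1; ext x; push_cast; ring

theorem FT1_indicator_Icc {a : ℝ} (ha : 0 < a) (ξ : ℝ) :
    FT1 (Set.indicator (Set.Icc 0 a) fun _ => 1) ξ = a * bumpFT (a * ξ) := by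
  have hind : ∀ x : ℝ, Complex.exp (-(2 * Real.pi * (x * ξ)) * Complex.I) *
      ((Set.indicator (Set.Icc 0 a) (fun _ => (1:ℝ)) x : ℝ) : ℂ) =
      Set.indicator (Set.Icc 0 a) (fun x => Complex.exp (-(2 * Real.pi * (x * ξ)) * Complex.I)) x := by
    intro x
    by_cases hx : x ∈ Set.Icc 0 a <;> simp [hx]
  set e : ℝ → ℂ := fun x => Complex.exp (-(2 * Real.pi * (x * ξ)) * Complex.I)
  have hscale : bumpFT (a * ξ) = ∫ y in (0:ℝ)..1, e (a * y) := by
    rw [bumpFT]; congr 1; ext y; simp only [e]; push_cast; ring_nf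
  rw [FT1, funext hind, integral_indicator measurableSet_Icc, integral_Icc_eq_integral_Ioc,
    ← intervalIntegral.integral_of_le ha.le, hscale,
    intervalIntegral.integral_comp_mul_left e ha.ne', mul_zero, mul_one, Complex.real_smul,
    ← mul_assoc, ← Complex.ofReal_mul, mul_inv_cancel₀ ha.ne', Complex.ofReal_one, one_mul]

noncomputable def normalizedBump (a x : ℝ) : ℝ :=
  a⁻¹ * Set.indicator (Set.Icc 0 a) (fun _ => 1) x

theorem integrable_normalizedBump (a : ℝ) : Integrable (normalizedBump a) :=
  ((integrableOn_const (by simp)).integrable_indicator measurableSet_Icc).const_mul _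

theorem FT1_normalizedBump {a : ℝ} (ha : 0 < a) (ξ : ℝ) :
    FT1 (normalizedBump a) ξ = bumpFT (a * ξ) := by
  unfold normalizedBump
  rw [FT1_const_mul, FT1_indicator_Icc ha, Complex.ofReal_inv,
    inv_mul_cancel_left₀ (by exact_mod_cast ha.ne')]

theorem norm_bumpFT_sub_bumpFT_le_two (s t : ℝ) : ‖bumpFT s - bumpFT t‖ ≤ 2 :=
  (norm_sub_le _ _).trans (by linarith [norm_bumpFT_le_one s, norm_bumpFT_le_one t])

theorem integrable_inv_one_add_sq_mul_norm_sub_bumpFT_sq (a₀ a₁ : ℝ) :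
    Integrable fun ξ : ℝ => (1 + ξ ^ 2)⁻¹ * ‖bumpFT (a₀ * ξ) - bumpFT (a₁ * ξ)‖ ^ 2 := by
  refine (integrable_inv_one_add_sq.const_mul 4).mono' (by fun_prop) (ae_of_all _ fun ξ => ?_)
  have h2 := norm_bumpFT_sub_bumpFT_le_two (a₀ * ξ) (a₁ * ξ)
  rw [Real.norm_of_nonneg (by positivity), mul_comm 4]
  gcongr
  nlinarith [norm_nonneg (bumpFT (a₀ * ξ) - bumpFT (a₁ * ξ))]

-- A Lorentzian majorant of `(1+ξ²)⁻¹ min(4, A²ξ²)`; its integral is `4πA`.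
theorem inv_one_add_sq_mul_sq_le {u A ξ : ℝ} (hu : 0 ≤ u) (hu₂ : u ≤ 2) (huA : u ≤ A * |ξ|) :
    (1 + ξ ^ 2)⁻¹ * u ^ 2 ≤ 2 * A ^ 2 * (1 + (A / 2 * ξ) ^ 2)⁻¹ := by
  have hsq : u ^ 2 ≤ A ^ 2 * ξ ^ 2 := by
    rw [← sq_abs ξ, ← mul_pow]; exact pow_le_pow_left₀ hu huA 2
  have key : u ^ 2 * (1 + (A / 2 * ξ) ^ 2) ≤ 2 * A ^ 2 * (1 + ξ ^ 2) := by
    have h4 : u ^ 2 * (A * ξ) ^ 2 ≤ 2 ^ 2 * (A * ξ) ^ 2 :=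
      mul_le_mul_of_nonneg_right (pow_le_pow_left₀ hu hu₂ 2) (sq_nonneg _)
    nlinarith [sq_nonneg A]
  rw [inv_mul_eq_div, ← div_eq_mul_inv, div_le_div_iff₀ (by positivity) (by positivity)]
  linarith

theorem integral_inv_one_add_mul_sq {b : ℝ} (hb : 0 < b) :
    ∫ ξ : ℝ, (1 + (b * ξ) ^ 2)⁻¹ = Real.pi / b := by
  rw [Measure.integral_comp_mul_left (fun y : ℝ => (1 + y ^ 2)⁻¹) b,
    integral_univ_inv_one_add_sq, smul_eq_mul, abs_of_pos (inv_pos.mpr hb), inv_mul_eq_div]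

theorem norm_sub_bumpFT_le {a₀ a₁ : ℝ} (ha₀ : 0 ≤ a₀) (ha₁ : 0 ≤ a₁) (ξ : ℝ) :
    ‖bumpFT (a₀ * ξ) - bumpFT (a₁ * ξ)‖ ≤ 2 * Real.pi * (a₀ + a₁) * |ξ| :=
  calc ‖bumpFT (a₀ * ξ) - bumpFT (a₁ * ξ)‖
      = ‖(bumpFT (a₀ * ξ) - 1) - (bumpFT (a₁ * ξ) - 1)‖ := by ring_nf
    _ ≤ ‖bumpFT (a₀ * ξ) - 1‖ + ‖bumpFT (a₁ * ξ) - 1‖ := norm_sub_le _ _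
    _ ≤ 2 * Real.pi * |a₀ * ξ| + 2 * Real.pi * |a₁ * ξ| :=
        add_le_add (norm_bumpFT_sub_one_le _) (norm_bumpFT_sub_one_le _)
    _ = 2 * Real.pi * (a₀ + a₁) * |ξ| := by
        rw [abs_mul, abs_mul, abs_of_nonneg ha₀, abs_of_nonneg ha₁]; ring

theorem integral_inv_one_add_sq_mul_norm_sub_bumpFT_sq_le {a₀ a₁ : ℝ} (ha₀ : 0 ≤ a₀)
    (ha₁ : 0 < a₁) :
    ∫ ξ : ℝ, (1 + ξ ^ 2)⁻¹ * ‖bumpFT (a₀ * ξ) - bumpFT (a₁ * ξ)‖ ^ 2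
      ≤ 8 * Real.pi ^ 2 * (a₀ + a₁) := by
  set A := 2 * Real.pi * (a₀ + a₁)
  have hA : 0 < A := by positivity
  have hmajorant : Integrable fun ξ : ℝ => 2 * A ^ 2 * (1 + (A / 2 * ξ) ^ 2)⁻¹ :=
    (integrable_inv_one_add_sq.comp_mul_left' (by positivity)).const_mul _
  calc _ ≤ ∫ ξ : ℝ, 2 * A ^ 2 * (1 + (A / 2 * ξ) ^ 2)⁻¹ :=
        integral_mono (integrable_inv_one_add_sq_mul_norm_sub_bumpFT_sq a₀ a₁) hmajorant
          fun ξ => inv_one_add_sq_mul_sq_le (norm_nonneg _)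
            (norm_bumpFT_sub_bumpFT_le_two _ _) (norm_sub_bumpFT_le ha₀ ha₁.le ξ)
    _ = 8 * Real.pi ^ 2 * (a₀ + a₁) := by
        rw [integral_const_mul, integral_inv_one_add_mul_sq (by positivity)]
        field_simp
        ring

theorem mul_mem_Icc_one_two {a ξ : ℝ} (ha : 0 < a) (hξ : ξ ∈ Set.Icc a⁻¹ (2 * a⁻¹)) :
    a * ξ ∈ Set.Icc 1 2 := by
  constructor
  · simpa [ha.ne'] using mul_le_mul_of_nonneg_left hξ.1 ha.le
  · simpa [mul_left_comm a 2, ha.ne'] using mul_le_mul_of_nonneg_left hξ.2 ha.le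

theorem half_le_norm_sub_bumpFT {a₀ a₁ ξ : ℝ} (ha₀ : 0 < a₀) (h : 1024 * a₀ ≤ a₁)
    (hξ : ξ ∈ Set.Icc a₁⁻¹ (2 * a₁⁻¹)) :
    1 / 2 ≤ ‖bumpFT (a₀ * ξ) - bumpFT (a₁ * ξ)‖ := by
  have ha₁ : 0 < a₁ := by linarith
  have hξ₀ : 0 < ξ := (inv_pos.mpr ha₁).trans_le hξ.1
  obtain ⟨h₁, h₂⟩ := mul_mem_Icc_one_two ha₁ hξ
  have h₀ : a₀ * ξ ≤ 1 / 512 := by nlinarith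
  have hdecay : ‖bumpFT (a₁ * ξ)‖ ≤ 1 / 3 :=
    calc _ ≤ (Real.pi * |a₁ * ξ|)⁻¹ := norm_bumpFT_le_inv (by positivity)
      _ ≤ (3 * 1)⁻¹ := by
          rw [abs_of_pos (by positivity)]
          gcongr
          exact Real.pi_gt_three.le
      _ = 1 / 3 := by norm_num
  have hnear : ‖bumpFT (a₀ * ξ) - 1‖ ≤ 1 / 8 :=
    calc _ ≤ 2 * Real.pi * |a₀ * ξ| := norm_bumpFT_sub_one_le _
      _ ≤ 2 * 4 * (1 / 512) := by
          rw [abs_of_pos (by positivity)]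
          gcongr
          exact Real.pi_lt_four.le
      _ ≤ 1 / 8 := by norm_num
  have htri : ‖(1:ℂ) - bumpFT (a₁ * ξ)‖ ≤
      ‖bumpFT (a₀ * ξ) - 1‖ + ‖bumpFT (a₀ * ξ) - bumpFT (a₁ * ξ)‖ := by
    rw [← norm_sub_rev 1]; exact norm_sub_le_norm_sub_add_norm_sub _ _ _
  have hone : 1 - ‖bumpFT (a₁ * ξ)‖ ≤ ‖(1:ℂ) - bumpFT (a₁ * ξ)‖ := by
    simpa using norm_sub_norm_le (1:ℂ) (bumpFT (a₁ * ξ))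
  linarith

theorem le_integral_inv_one_add_sq_mul_norm_sub_bumpFT_sq {a₀ a₁ : ℝ} (ha₀ : 0 < a₀)
    (h : 1024 * a₀ ≤ a₁) (ha₁ : a₁ ≤ 1) :
    a₁ / 20 ≤ ∫ ξ : ℝ, (1 + ξ ^ 2)⁻¹ * ‖bumpFT (a₀ * ξ) - bumpFT (a₁ * ξ)‖ ^ 2 := by
  have ha₁₀ : 0 < a₁ := by linarith
  have hint := integrable_inv_one_add_sq_mul_norm_sub_bumpFT_sq a₀ a₁
  have hpoint : ∀ ξ ∈ Set.Icc a₁⁻¹ (2 * a₁⁻¹),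
      a₁ ^ 2 / 20 ≤ (1 + ξ ^ 2)⁻¹ * ‖bumpFT (a₀ * ξ) - bumpFT (a₁ * ξ)‖ ^ 2 := by
    intro ξ hξ
    have hF : 1 / 2 ≤ ‖bumpFT (a₀ * ξ) - bumpFT (a₁ * ξ)‖ := half_le_norm_sub_bumpFT ha₀ h hξ
    obtain ⟨h₁, h₂⟩ := mul_mem_Icc_one_two ha₁₀ hξ
    have hweight : a₁ ^ 2 / 5 ≤ (1 + ξ ^ 2)⁻¹ := by
      rw [← one_div, le_div_iff₀ (by positivity)]
      nlinarith
    calc a₁ ^ 2 / 20 = a₁ ^ 2 / 5 * (1 / 2) ^ 2 := by ring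
      _ ≤ _ := by gcongr
  calc a₁ / 20 = a₁ ^ 2 / 20 * volume.real (Set.Icc a₁⁻¹ (2 * a₁⁻¹)) := by
        rw [Real.volume_real_Icc_of_le (by linarith [inv_pos.mpr ha₁₀])]
        field_simp
        ring
    _ ≤ ∫ ξ in Set.Icc a₁⁻¹ (2 * a₁⁻¹), (1 + ξ ^ 2)⁻¹ * ‖bumpFT (a₀ * ξ) - bumpFT (a₁ * ξ)‖ ^ 2 :=
        setIntegral_ge_of_const_le_real measurableSet_Icc (by simp) hpoint hint.integrableOn
    _ ≤ _ := setIntegral_le_integral hint (ae_of_all _ fun ξ => by positivity)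

theorem Hneg1_normalizedBump_sub {a₀ a₁ : ℝ} (ha₀ : 0 < a₀) (h : 1024 * a₀ ≤ a₁)
    (ha₁ : a₁ ≤ 1) :
    1 / 5 * √a₁ ≤ Hneg1 (fun x => normalizedBump a₀ x - normalizedBump a₁ x) ∧
      Hneg1 (fun x => normalizedBump a₀ x - normalizedBump a₁ x) ≤ 13 * √a₁ := by
  have ha₁₀ : 0 < a₁ := by linarith
  have hH : Hneg1 (fun x => normalizedBump a₀ x - normalizedBump a₁ x) =
      √(∫ ξ : ℝ, (1 + ξ ^ 2)⁻¹ * ‖bumpFT (a₀ * ξ) - bumpFT (a₁ * ξ)‖ ^ 2) := by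
    simp only [Hneg1, FT1_sub (integrable_normalizedBump a₀) (integrable_normalizedBump a₁),
      FT1_normalizedBump ha₀, FT1_normalizedBump ha₁₀, Real.sqrt_eq_rpow]
  have hlow := le_integral_inv_one_add_sq_mul_norm_sub_bumpFT_sq ha₀ h ha₁
  have hup := integral_inv_one_add_sq_mul_norm_sub_bumpFT_sq_le ha₀.le ha₁₀
  have hπ : Real.pi ^ 2 < 10 := by nlinarith [Real.pi_lt_d2, Real.pi_pos]
  rw [hH]
  constructor
  · calc 1 / 5 * √a₁ = √(a₁ / 5 ^ 2) := by
          rw [Real.sqrt_div' _ (by norm_num), Real.sqrt_sq (by norm_num)]; ring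
      _ ≤ _ := Real.sqrt_le_sqrt (by linarith)
  · calc _ ≤ √(13 ^ 2 * a₁) := Real.sqrt_le_sqrt (by nlinarith)
      _ = 13 * √a₁ := by rw [Real.sqrt_mul' _ ha₁₀.le, Real.sqrt_sq (by norm_num)]

theorem two_pow_natCast_eq_inv_rpow_neg (j : ℕ) : (2:ℝ) ^ j = ((2:ℝ) ^ (-(j:ℝ)))⁻¹ := by
  rw [Real.rpow_neg zero_le_two, Real.rpow_natCast, inv_inv]

/-- For `ρ = 2^{j₀} 1_{[0,2^{-j₀}]} - 2^{j₁} 1_{[0,2^{-j₁}]}` with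
`j₁ ≥ 1` and `j₀ ≥ j₁ + 10`, one has `‖ρ‖_{H^{-1}} ≈ 2^{-j₁/2}` with absolute constants. -/
theorem Hneg1_two_bump :
    ∃ c C : ℝ, 0 < c ∧ 0 < C ∧
      ∀ j₁ j₀ : ℕ, 1 ≤ j₁ → j₁ + 10 ≤ j₀ →
        ∀ ρ : ℝ → ℝ,
          ρ = (fun x => (2:ℝ) ^ (j₀:ℕ) * Set.indicator (Set.Icc (0:ℝ) ((2:ℝ) ^ (-(j₀:ℝ)))) (fun _ => (1:ℝ)) x
                - (2:ℝ) ^ (j₁:ℕ) * Set.indicator (Set.Icc (0:ℝ) ((2:ℝ) ^ (-(j₁:ℝ)))) (fun _ => (1:ℝ)) x) →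
          c * (2:ℝ) ^ (-(j₁:ℝ) / 2) ≤ Hneg1 ρ ∧ Hneg1 ρ ≤ C * (2:ℝ) ^ (-(j₁:ℝ) / 2) := by
  refine ⟨1 / 5, 13, by norm_num, by norm_num, fun j₁ j₀ _ hj ρ hρ => ?_⟩
  have hρ' : ρ = fun x => normalizedBump (2 ^ (-(j₀:ℝ))) x - normalizedBump (2 ^ (-(j₁:ℝ))) x := by
    simp only [hρ, normalizedBump, two_pow_natCast_eq_inv_rpow_neg]
  have hsqrt : (2:ℝ) ^ (-(j₁:ℝ) / 2) = √(2 ^ (-(j₁:ℝ))) := by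
    rw [Real.sqrt_eq_rpow, ← Real.rpow_mul zero_le_two, div_eq_mul_one_div]
  have hsep : 1024 * (2:ℝ) ^ (-(j₀:ℝ)) ≤ 2 ^ (-(j₁:ℝ)) :=
    calc 1024 * (2:ℝ) ^ (-(j₀:ℝ)) = 2 ^ ((10:ℝ) + -(j₀:ℝ)) := by
          rw [Real.rpow_add two_pos]; norm_num
      _ ≤ 2 ^ (-(j₁:ℝ)) := by
          have : (j₁:ℝ) + 10 ≤ j₀ := by exact_mod_cast hj
          exact Real.rpow_le_rpow_of_exponent_le one_le_two (by linarith)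
  rw [hρ', hsqrt]
  exact Hneg1_normalizedBump_sub (by positivity) hsep
    (Real.rpow_le_one_of_one_le_of_nonpos one_le_two (by simp))
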